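/- The subgroup of GL(2,ℤ) generated by the six matrices f₀ = [[1,2],[0,−1]], f₁ = [[0,1],[1,0]], τ₁² = [[1,2],[0,1]], τ₂² = [[1,0],[−2,1]], r̄₁ = [[−1,0],[0,1]], r̄₂ = [[1,0],[0,−1]] is exactly 𝒳, the set of matrices in GL(2,ℤ) whose two column sums are both odd. -/

import Mathlib

open Matrix

/-- Membership in `𝒳`: both column sums of `g` are odd. -/
def memX (g : Matrix.GeneralLinearGroup (Fin 2) ℤ) : Prop :=
  ((↑g : Matrix (Fin 2) (Fin 2) ℤ) 0 0 + (↑g : Matrix (Fin 2) (Fin 2) ℤ) 1 0) % 2 = 1 ∧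
  ((↑g : Matrix (Fin 2) (Fin 2) ℤ) 0 1 + (↑g : Matrix (Fin 2) (Fin 2) ℤ) 1 1) % 2 = 1

/-- `f₀ = [[1,2],[0,−1]]` as an element of `GL(2,ℤ)`. -/
def f0U : Matrix.GeneralLinearGroup (Fin 2) ℤ :=
  ⟨!![1, 2; 0, -1], !![1, 2; 0, -1], by decide, by decide⟩

/-- `f₁ = [[0,1],[1,0]]` as an element of `GL(2,ℤ)`. -/
def f1U : Matrix.GeneralLinearGroup (Fin 2) ℤ :=
  ⟨!![0, 1; 1, 0], !![0, 1; 1, 0], by decide, by decide⟩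

/-- `τ₁² = [[1,2],[0,1]]` as an element of `GL(2,ℤ)`. -/
def tau1sqU : Matrix.GeneralLinearGroup (Fin 2) ℤ :=
  ⟨!![1, 2; 0, 1], !![1, -2; 0, 1], by decide, by decide⟩

/-- `τ₂² = [[1,0],[−2,1]]` as an element of `GL(2,ℤ)`. -/
def tau2sqU : Matrix.GeneralLinearGroup (Fin 2) ℤ :=
  ⟨!![1, 0; -2, 1], !![1, 0; 2, 1], by decide, by decide⟩

/-- `r̄₁ = [[−1,0],[0,1]]` as an element of `GL(2,ℤ)`. -/
def rbar1U : Matrix.GeneralLinearGroup (Fin 2) ℤ :=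
  ⟨!![-1, 0; 0, 1], !![-1, 0; 0, 1], by decide, by decide⟩

/-- `r̄₂ = [[1,0],[0,−1]]` as an element of `GL(2,ℤ)`. -/
def rbar2U : Matrix.GeneralLinearGroup (Fin 2) ℤ :=
  ⟨!![1, 0; 0, -1], !![1, 0; 0, -1], by decide, by decide⟩


/-!
Column sums of `g` are the entries of the row vector `(1, 1) g`, so `𝒳` is the preimage under
reduction mod 2 of the stabiliser of `(1, 1)`; in particular it is a subgroup, and it contains
the six generators.

Conversely, let `g ∈ 𝒳` have first column `(a, c)`. Since `a + c` is odd, `|a| ≠ |c|`, and left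
multiplication by `τ₁² ^ k` or `τ₂² ^ k` (which adds `2k` times one row to the other) lowers
`|a| + |c|` unless `a = 0` or `c = 0`; `f₁` swaps the rows. This Euclidean descent ends at an upper
triangular `g`, whose diagonal entries are then units `±1`, so that the odd column sum forces the
upper right entry to be even and a power of `τ₁²` clears it. What is left is a diagonal sign
matrix, a product of `r̄₁` and `r̄₂`.
-/

namespace Matrix.GeneralLinearGroup

variable {n R : Type*} [Fintype n] [DecidableEq n] [CommRing R]

def vecMulStabilizer (v : n → R) : Subgroup (GL n R) where
  carrier := {g | v ᵥ* (g : Matrix n n R) = v}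
  mul_mem' {g h} hg hh := by
    rw [Set.mem_ofPred_eq, Units.val_mul, ← vecMul_vecMul, hg, hh]
  one_mem' := vecMul_one v
  inv_mem' {g} hg :=
    calc v ᵥ* (g⁻¹ : GL n R) = (v ᵥ* (g : Matrix n n R)) ᵥ* (g⁻¹ : GL n R) := by rw [hg]
      _ = v := by rw [vecMul_vecMul, ← Units.val_mul, mul_inv_cancel, Units.val_one, vecMul_one]

lemma isUnit_diag_of_lower_left_eq_zero (g : GL (Fin 2) R)
    (hc : (g : Matrix (Fin 2) (Fin 2) R) 1 0 = 0) :
    IsUnit ((g : Matrix (Fin 2) (Fin 2) R) 0 0) ∧ IsUnit ((g : Matrix (Fin 2) (Fin 2) R) 1 1) := by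
  have hdet := (isUnit_iff_isUnit_det _).1 g.isUnit
  rwa [det_fin_two, hc, mul_zero, sub_zero, IsUnit.mul_iff] at hdet

end Matrix.GeneralLinearGroup

lemma Int.exists_natAbs_add_two_mul_lt {x y : ℤ} (hy : y ≠ 0) (h : y.natAbs < x.natAbs) :
    ∃ k : ℤ, (x + 2 * k * y).natAbs < x.natAbs := by
  by_cases hxy : 0 < x ↔ 0 < y
  · exact ⟨-1, by omega⟩
  · exact ⟨1, by omega⟩

open Matrix.GeneralLinearGroup

local notation:1024 "↑ₘ" A:1024 => ((A : GL (Fin 2) ℤ) : Matrix (Fin 2) (Fin 2) ℤ)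

def oddColSums : Subgroup (GL (Fin 2) ℤ) :=
  (vecMulStabilizer (1 : Fin 2 → ZMod 2)).comap (map (Int.castRingHom (ZMod 2)))

lemma mem_oddColSums_iff {g : GL (Fin 2) ℤ} : g ∈ oddColSums ↔ memX g := by
  simp [oddColSums, vecMulStabilizer, Matrix.GeneralLinearGroup.map, memX, funext_iff, vecMul,
    dotProduct, ← Int.cast_add, ZMod.intCast_eq_one_iff_odd, Int.odd_iff]

lemma generators_subset_oddColSums :
    ({f0U, f1U, tau1sqU, tau2sqU, rbar1U, rbar2U} : Set (GL (Fin 2) ℤ)) ⊆ oddColSums := by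
  simp only [Set.insert_subset_iff, Set.singleton_subset_iff, SetLike.mem_coe, mem_oddColSums_iff,
    memX]
  decide

lemma coe_tau1sqU_zpow (k : ℤ) : ↑ₘ(tau1sqU ^ k) = transvection 0 1 (2 * k) := by
  induction k using Int.induction_on with
  | zero => simp
  | succ k ih =>
    rw [_root_.zpow_add_one, Units.val_mul, ih, show ↑ₘtau1sqU = transvection 0 1 2 by decide]
    exact (transvection_mul_transvection_same 0 1 zero_ne_one _ _).trans (by ring_nf)
  | pred k ih =>
    rw [_root_.zpow_sub_one, Units.val_mul, ih,
      show ↑ₘtau1sqU⁻¹ = transvection 0 1 (-2) by decide]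
    exact (transvection_mul_transvection_same 0 1 zero_ne_one _ _).trans (by ring_nf)

lemma coe_tau2sqU_zpow (k : ℤ) : ↑ₘ(tau2sqU ^ k) = transvection 1 0 (-2 * k) := by
  induction k using Int.induction_on with
  | zero => simp
  | succ k ih =>
    rw [_root_.zpow_add_one, Units.val_mul, ih, show ↑ₘtau2sqU = transvection 1 0 (-2) by decide]
    exact (transvection_mul_transvection_same 1 0 one_ne_zero _ _).trans (by ring_nf)
  | pred k ih =>
    rw [_root_.zpow_sub_one, Units.val_mul, ih, show ↑ₘtau2sqU⁻¹ = transvection 1 0 2 by decide]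
    exact (transvection_mul_transvection_same 1 0 one_ne_zero _ _).trans (by ring_nf)

lemma coe_tau1sqU_zpow_mul (k : ℤ) (g : GL (Fin 2) ℤ) :
    ↑ₘ(tau1sqU ^ k * g) = transvection 0 1 (2 * k) * ↑ₘg := by
  rw [Units.val_mul, coe_tau1sqU_zpow]

lemma coe_tau2sqU_zpow_mul (k : ℤ) (g : GL (Fin 2) ℤ) :
    ↑ₘ(tau2sqU ^ k * g) = transvection 1 0 (-2 * k) * ↑ₘg := by
  rw [Units.val_mul, coe_tau2sqU_zpow]

section

variable {H : Subgroup (GL (Fin 2) ℤ)}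

lemma mem_of_offDiag_eq_zero (hr₁ : rbar1U ∈ H) (hr₂ : rbar2U ∈ H) {g : GL (Fin 2) ℤ}
    (hb : ↑ₘg 0 1 = 0) (hc : ↑ₘg 1 0 = 0) : g ∈ H := by
  obtain ⟨ha, hd⟩ := isUnit_diag_of_lower_left_eq_zero g hc
  rw [Int.isUnit_iff] at ha hd
  rcases ha with ha | ha <;> rcases hd with hd | hd <;>
    [convert H.one_mem; convert hr₂; convert hr₁; convert H.mul_mem hr₁ hr₂] <;>
  · ext i j
    fin_cases i <;> fin_cases j <;> simp [*, rbar1U, rbar2U]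

lemma mem_of_lower_left_eq_zero (hτ₁ : tau1sqU ∈ H) (hr₁ : rbar1U ∈ H) (hr₂ : rbar2U ∈ H)
    {g : GL (Fin 2) ℤ} (hg : g ∈ oddColSums) (hc : ↑ₘg 1 0 = 0) : g ∈ H := by
  obtain ⟨-, hd⟩ := isUnit_diag_of_lower_left_eq_zero g hc
  obtain ⟨-, hbd⟩ := mem_oddColSums_iff.1 hg
  obtain ⟨k, hk⟩ : ∃ k : ℤ, ↑ₘg 0 1 + 2 * k * ↑ₘg 1 1 = 0 := by
    rcases Int.isUnit_iff.1 hd with hd | hd <;> rw [hd] at hbd ⊢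
    exacts [⟨-(↑ₘg 0 1 / 2), by omega⟩, ⟨↑ₘg 0 1 / 2, by omega⟩]
  rw [← H.mul_mem_cancel_left (H.zpow_mem hτ₁ k)]
  apply mem_of_offDiag_eq_zero hr₁ hr₂
  · rw [coe_tau1sqU_zpow_mul]
    simpa using hk
  · rw [coe_tau1sqU_zpow_mul]
    simpa using hc

lemma oddColSums_le (hf₁ : f1U ∈ H) (hτ₁ : tau1sqU ∈ H) (hτ₂ : tau2sqU ∈ H) (hr₁ : rbar1U ∈ H)
    (hr₂ : rbar2U ∈ H) : oddColSums ≤ H := by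
  have hf₁X : f1U ∈ oddColSums := generators_subset_oddColSums (by simp)
  have hτ₁X : tau1sqU ∈ oddColSums := generators_subset_oddColSums (by simp)
  have hτ₂X : tau2sqU ∈ oddColSums := generators_subset_oddColSums (by simp)
  intro g hg
  induction hn : (↑ₘg 0 0).natAbs + (↑ₘg 1 0).natAbs using Nat.strong_induction_on
    generalizing g with | _ n ih
  obtain ⟨hac, -⟩ := mem_oddColSums_iff.1 hg
  by_cases hc : ↑ₘg 1 0 = 0
  · exact mem_of_lower_left_eq_zero hτ₁ hr₁ hr₂ hg hc
  by_cases ha : ↑ₘg 0 0 = 0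
  · rw [← H.mul_mem_cancel_left hf₁]
    exact mem_of_lower_left_eq_zero hτ₁ hr₁ hr₂ (mul_mem hf₁X hg) (by simpa [f1U, mul_apply])
  rcases lt_or_gt_of_ne (show (↑ₘg 0 0).natAbs ≠ (↑ₘg 1 0).natAbs by omega) with hlt | hlt
  · obtain ⟨k, hk⟩ := Int.exists_natAbs_add_two_mul_lt ha hlt
    rw [← H.mul_mem_cancel_left (H.zpow_mem hτ₂ (-k))]
    refine ih _ ?_ (mul_mem (zpow_mem hτ₂X _) hg) rfl
    rw [coe_tau2sqU_zpow_mul]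
    simp only [transvection_mul_apply_same, transvection_mul_apply_of_ne, ne_eq, zero_ne_one,
      not_false_eq_true, mul_neg, neg_mul, neg_neg]
    omega
  · obtain ⟨k, hk⟩ := Int.exists_natAbs_add_two_mul_lt hc hlt
    rw [← H.mul_mem_cancel_left (H.zpow_mem hτ₁ k)]
    refine ih _ ?_ (mul_mem (zpow_mem hτ₁X _) hg) rfl
    rw [coe_tau1sqU_zpow_mul]
    simp only [transvection_mul_apply_same, transvection_mul_apply_of_ne, ne_eq, one_ne_zero,
      not_false_eq_true]
    omega

end

/-- the subgroup of `GL(2,ℤ)` generated by `f₀, f₁, τ₁², τ₂², r̄₁, r̄₂`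
is exactly `𝒳`, the set of matrices whose two column sums are both odd. -/
theorem closure_six_eq_X (g : Matrix.GeneralLinearGroup (Fin 2) ℤ) :
    g ∈ Subgroup.closure
        ({f0U, f1U, tau1sqU, tau2sqU, rbar1U, rbar2U} :
          Set (Matrix.GeneralLinearGroup (Fin 2) ℤ)) ↔ memX g := by
  rw [← mem_oddColSums_iff]
  refine SetLike.ext_iff.1
    (le_antisymm ((Subgroup.closure_le _).2 generators_subset_oddColSums) ?_) g
  apply oddColSums_le <;> exact Subgroup.subset_closure (by simp)
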